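/- arXiv:2112.04987 — 3 statements merged into one kernel-verified Lean document; each statement's English description precedes it below -/
import Mathlib

section
/- For k < 0, the complex eigenvalues of the 4×4 matrix M = [[0,−1,−k,0],[1,0,0,−k],[1,0,0,−1],[0,1,1,0]] (viewed over ℂ) are exactly the four numbers ε₁·√(−k) + ε₂·i with ε₁, ε₂ ∈ {+1,−1}; these four numbers are pairwise distinct, and each of them has nonzero real part and nonzero imaginary part (in particular none of them is zero, real, or purely imaginary). Hence the equilibrium at the origin is a nondegenerate singular point of focus-focus type. -/
/-!
The matrix is `A_H + A_F` with commuting summands: `A_H` has eigenvalues `±√(-k)` and the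
rotation generator `A_F` has eigenvalues `±i`, so the characteristic polynomial
`(z² - k + 1)² + 4kz²` splits as `((z - √(-k))² + 1)((z + √(-k))² + 1)`.
-/

open Complex Matrix

theorem Matrix.mem_spectrum_iff_det_scalar_sub_eq_zero {n K : Type*} [Fintype n] [DecidableEq n]
    [Field K] (A : Matrix n n K) (z : K) : z ∈ spectrum K A ↔ (scalar n z - A).det = 0 := by
  rw [mem_spectrum_iff_isRoot_charpoly, Polynomial.IsRoot.def, eval_charpoly]

theorem det_scalar_sub_focusFocus {R : Type*} [CommRing R] (k z : R) :
    (scalar (Fin 4) z - !![0, -1, -k, 0; 1, 0, 0, -k; 1, 0, 0, -1; 0, 1, 1, 0]).det =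
      (z ^ 2 - k + 1) ^ 2 + 4 * k * z ^ 2 := by
  rw [det_succ_row_zero]
  simp [Fin.sum_univ_succ, det_fin_three, Fin.succAbove]
  ring

theorem focusFocus_charpoly_eq_prod (k z s : ℂ) (hs : s ^ 2 = -k) :
    (z ^ 2 - k + 1) ^ 2 + 4 * k * z ^ 2 =
      (z - (s + I)) * (z - (s - I)) * (z - (-s + I)) * (z - (-s - I)) := by
  linear_combination (2 * z ^ 2 + k - s ^ 2 - 2) * hs
    - (I ^ 2 - 1 - (z - s) ^ 2 - (z + s) ^ 2) * I_sq

theorem pairwise_ne_ofReal_add_I {r : ℝ} (hr : r ≠ 0) :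
    [(r : ℂ) + I, r - I, -r + I, -r - I].Pairwise (· ≠ ·) := by
  simp only [List.pairwise_cons, List.mem_cons, List.not_mem_nil, or_false,
    forall_eq_or_imp, forall_eq, List.Pairwise.nil, and_true, IsEmpty.forall_iff, forall_const]
  norm_num [Complex.ext_iff, self_eq_neg, hr]

theorem re_ne_zero_and_im_ne_zero_of_mem {r : ℝ} (hr : r ≠ 0) :
    ∀ z ∈ ({(r : ℂ) + I, r - I, -r + I, -r - I} : Set ℂ), z.re ≠ 0 ∧ z.im ≠ 0 := by
  simp [hr]

/-- For `k < 0`, the complex eigenvalues (the spectrum over ℂ) of the matrix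
`M = [[0,-1,-k,0],[1,0,0,-k],[1,0,0,-1],[0,1,1,0]]` are exactly the four
numbers `±√(-k) ± i`; these four numbers are pairwise distinct, and each has
nonzero real part and nonzero imaginary part. -/
theorem eigenvalues_focus_focus (k : ℝ) (hk : k < 0) :
    let s : ℂ := (Real.sqrt (-k) : ℝ)
    let M : Matrix (Fin 4) (Fin 4) ℂ :=
      !![0, -1, -(k : ℂ), 0; 1, 0, 0, -(k : ℂ); 1, 0, 0, -1; 0, 1, 1, 0]
    spectrum ℂ M = {s + I, s - I, -s + I, -s - I} ∧
    [s + I, s - I, -s + I, -s - I].Pairwise (· ≠ ·) ∧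
    (∀ z ∈ spectrum ℂ M, z.re ≠ 0 ∧ z.im ≠ 0) := by
  intro s M
  have hsqrt : Real.sqrt (-k) ≠ 0 := (Real.sqrt_pos.mpr (neg_pos.mpr hk)).ne'
  have hs : s ^ 2 = -k := by
    rw [← ofReal_pow, Real.sq_sqrt (neg_nonneg.mpr hk.le), ofReal_neg]
  have hspec : spectrum ℂ M = {s + I, s - I, -s + I, -s - I} := by
    ext z
    rw [mem_spectrum_iff_det_scalar_sub_eq_zero, det_scalar_sub_focusFocus,
      focusFocus_charpoly_eq_prod _ _ _ hs]
    simp only [mul_eq_zero, sub_eq_zero, Set.mem_insert_iff, Set.mem_singleton_iff, or_assoc]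
  refine ⟨hspec, pairwise_ne_ofReal_add_I hsqrt, ?_⟩
  rw [hspec]
  exact re_ne_zero_and_im_ne_zero_of_mem hsqrt
end

section
/- For k < 0, the image of the momentum map of the Hooke billiard in the unit disk is the closed parabolic region above the parabola h = (f² + k)/2: the set { (H(x,y,u,v), F(x,y,u,v)) : (x,y,u,v) ∈ ℝ⁴, x² + y² ≤ 1 } equals { (h,f) ∈ ℝ² : 2h ≥ f² + k }. -/
/-- For `k < 0`, the image of the momentum map `(H,F)` of the Hooke billiard
in the unit disk is the closed parabolic region `2h ≥ f² + k`. -/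
theorem momentum_map_image (k : ℝ) (hk : k < 0) :
    {q : ℝ × ℝ | ∃ x y u v : ℝ, x ^ 2 + y ^ 2 ≤ 1 ∧
        q = ((u ^ 2 + v ^ 2) / 2 + k * (x ^ 2 + y ^ 2) / 2, x * v - y * u)}
      = {q : ℝ × ℝ | 2 * q.1 ≥ q.2 ^ 2 + k} := by
  ext ⟨h, f⟩
  simp only [Set.mem_setOf_eq, Prod.mk.injEq]
  constructor
  · rintro ⟨x, y, u, v, hr, rfl, rfl⟩
    nlinarith [sq_nonneg (x*u + y*v), sq_nonneg (x*v - y*u),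
      mul_nonneg (sub_nonneg.2 hr) (add_nonneg (sq_nonneg u) (sq_nonneg v)),
      mul_nonneg (neg_pos.2 hk).le (sub_nonneg.2 hr)]
  · intro hge
    have hnn : 0 ≤ 2 * h - f ^ 2 - k := by linarith
    refine ⟨1, 0, Real.sqrt (2 * h - f ^ 2 - k), f, by norm_num, ?_, by ring⟩
    have := Real.sq_sqrt hnn
    rw [this] at *
    · nlinarith [Real.sq_sqrt hnn]
end

section
/- On the parabolic boundary of the momentum map image the motion is confined to the boundary circle with tangential velocity of speed |f|: if k < 0, f ≠ 0, 2h = f² + k, and (x,y,u,v) ∈ ℝ⁴ satisfies x² + y² ≤ 1, H(x,y,u,v) = h and F(x,y,u,v) = f, then x² + y² = 1, x·u + y·v = 0, and u² + v² = f². -/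
/-- On the parabolic boundary `2h = f² + k` of the momentum map image (with
`k < 0`, `f ≠ 0`), the motion is confined to the boundary circle, the velocity
is tangential, and its speed is `|f|`. -/
theorem motion_on_boundary_parabola (k h f x y u v : ℝ)
    (hk : k < 0) (hf : f ≠ 0) (hpar : 2 * h = f ^ 2 + k)
    (hdisk : x ^ 2 + y ^ 2 ≤ 1)
    (hH : (u ^ 2 + v ^ 2) / 2 + k * (x ^ 2 + y ^ 2) / 2 = h)
    (hF : x * v - y * u = f) :
    x ^ 2 + y ^ 2 = 1 ∧ x * u + y * v = 0 ∧ u ^ 2 + v ^ 2 = f ^ 2 := by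
  have key : (x ^ 2 + y ^ 2) * (u ^ 2 + v ^ 2) = f ^ 2 + (x * u + y * v) ^ 2 := by
    rw [← hF]; ring
  have hfpos : 0 < f ^ 2 := by positivity
  have hR : x ^ 2 + y ^ 2 = 1 := by
    nlinarith [sq_nonneg (x*u + y*v), sq_nonneg (x^2 + y^2 - 1)]
  have hU : u ^ 2 + v ^ 2 = f ^ 2 := by nlinarith
  have hs : x * u + y * v = 0 := by nlinarith [sq_nonneg (x*u + y*v)]
  exact ⟨hR, hs, hU⟩
end
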